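/- arXiv:2001.00643 — 2 statements merged into one kernel-verified Lean document; each statement's English description precedes it below -/
import Mathlib

section
/- Let G = (V,E) be a graph on N vertices with minimum degree at least N − N/8, whose edges are coloured with three colours. If the largest monochromatic component in G has fewer than 3N/4 vertices, then there exists a monochromatic component in a different colour from the largest one having at least N/2 vertices. -/
open SimpleGraph

/-!
Let `A` be the vertex set of the largest component `K₁`, of colour `i₁`, and suppose that every
component of the other two colours `j`, `k` has fewer than `N / 2` vertices. All edges between `A`
and `Aᶜ` then have colour `j` or `k`, and pigeonhole at a vertex of `K₁` together with
`|K₁| < 3N / 4` gives `|A|, |Aᶜ| ≥ N / 4`. As every vertex misses fewer than `N / 8` vertices, two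
disjoint sets of more than `N / 4 - 2` and `N / 8 - 1` vertices all of whose crossing edges have
colour `k` lie in a single `k`-component.

For a `j`-component `M`, the edges between `A ∩ M` and `Aᶜ \ M`, and between `Aᶜ ∩ M` and `A \ M`,
must have colour `k`. Merging these pieces shows that no component meets both sides in `N / 8`
vertices, and then that each meets `A` in fewer than `N / 4` vertices, and in fewer than `N / 8`
once `|Aᶜ| ≥ 3N / 8 - 2`. A vertex outside `A` reaches all but `N / 8` vertices of `A` through its
`j`- and `k`-components, which bounds `|A|`; together with the same bound for `Aᶜ` this contradicts
`|A| + |Aᶜ| = N`.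
-/

/-- The subgraph of `G` spanned by the edges of colour `i` under the edge-colouring `c`. -/
def colourGraph {V : Type*} (G : SimpleGraph V) (c : Sym2 V → Fin 3) (i : Fin 3) :
    SimpleGraph V where
  Adj u v := G.Adj u v ∧ c s(u, v) = i
  symm := ⟨fun u v h => ⟨h.1.symm, by rw [Sym2.eq_swap]; exact h.2⟩⟩
  loopless := ⟨fun v h => G.ne_of_adj h.1 rfl⟩

namespace SimpleGraph

variable {V : Type*} {G H : SimpleGraph V} {b : ℝ}

def IsDense (G : SimpleGraph V) (b : ℝ) : Prop :=
  ∀ v, (Nat.card V : ℝ) - b ≤ (G.neighborSet v).ncard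

namespace IsDense

variable [Finite V]

theorem ncard_sdiff_neighborSet_le (hG : G.IsDense b) {v : V} {W : Set V} (hv : v ∉ W) :
    ((W \ G.neighborSet v).ncard : ℝ) ≤ b - 1 := by
  have hsub : W \ G.neighborSet v ⊆ (insert v (G.neighborSet v))ᶜ := by
    rintro x ⟨hxW, hxN⟩ (rfl | hx)
    exacts [hv hxW, hxN hx]
  have hcard := Set.ncard_add_ncard_compl (insert v (G.neighborSet v))
  rw [Set.ncard_insert_of_notMem G.notMem_neighborSet_self] at hcard
  have : ((W \ G.neighborSet v).ncard : ℝ) + (G.neighborSet v).ncard + 1 ≤ Nat.card V := by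
    have := Set.ncard_le_ncard hsub
    exact_mod_cast (by omega : _ ≤ Nat.card V)
  linarith [hG v]

theorem one_le [Nonempty V] (hG : G.IsDense b) : 1 ≤ b := by
  have := hG.ncard_sdiff_neighborSet_le (Set.notMem_empty (Classical.arbitrary V))
  simp only [Set.empty_sdiff, Set.ncard_empty, Nat.cast_zero] at this
  linarith

theorem ncard_sub_le_ncard_inter_neighborSet (hG : G.IsDense b) {v : V} {W : Set V}
    (hv : v ∉ W) : (W.ncard : ℝ) - (b - 1) ≤ (W ∩ G.neighborSet v).ncard := by
  have hsplit : ((W ∩ G.neighborSet v).ncard : ℝ) + (W \ G.neighborSet v).ncard = W.ncard := by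
    exact_mod_cast Set.ncard_inter_add_ncard_sdiff_eq_ncard W (G.neighborSet v)
  linarith [hG.ncard_sdiff_neighborSet_le hv]

theorem exists_adj_of_sub_one_lt (hG : G.IsDense b) {v : V} {W : Set V} (hv : v ∉ W)
    (hW : b - 1 < W.ncard) : ∃ w ∈ W, G.Adj v w := by
  have := hG.ncard_sub_le_ncard_inter_neighborSet hv
  obtain ⟨w, hwW, hw⟩ := Set.nonempty_of_ncard_ne_zero (s := W ∩ G.neighborSet v)
    (by intro h; rw [h] at this; push_cast at this; linarith)
  exact ⟨w, hwW, hw⟩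

theorem exists_common_adj (hG : G.IsDense b) {u v : V} {W : Set V} (hu : u ∉ W) (hv : v ∉ W)
    (hW : 2 * (b - 1) < W.ncard) : ∃ w ∈ W, G.Adj u w ∧ G.Adj v w := by
  have h₁ := hG.ncard_sub_le_ncard_inter_neighborSet hu
  obtain ⟨w, ⟨hwW, hu⟩, hv⟩ := hG.exists_adj_of_sub_one_lt (v := v) (W := W ∩ G.neighborSet u)
    (fun h => hv h.1) (by linarith)
  exact ⟨w, hwW, hu, hv⟩

theorem exists_connectedComponent_union_subset (hG : G.IsDense b) (hb : 1 ≤ b)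
    {P Q : Set V} (hPQ : Disjoint P Q) (hH : ∀ p ∈ P, ∀ q ∈ Q, G.Adj p q → H.Adj p q)
    (hP : b - 1 < P.ncard) (hQ : b - 1 < Q.ncard)
    (hbig : 2 * (b - 1) < P.ncard ∨ 2 * (b - 1) < Q.ncard) :
    ∃ K : H.ConnectedComponent, P ∪ Q ⊆ K.supp := by
  wlog hP₂ : 2 * (b - 1) < P.ncard generalizing P Q
  · obtain ⟨K, hK⟩ := this hPQ.symm (fun q hq p hp h => (hH p hp q hq h.symm).symm) hQ hP
      hbig.symm (hbig.resolve_left hP₂)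
    exact ⟨K, Set.union_comm P Q ▸ hK⟩
  obtain ⟨q₀, hq₀⟩ := Set.nonempty_of_ncard_ne_zero (s := Q) (by
    intro h; rw [h] at hQ; push_cast at hQ; linarith)
  set K := H.connectedComponentMk q₀
  have hQK : Q ⊆ K.supp := fun q hq => by
    obtain ⟨p, hp, hq₀p, hqp⟩ := hG.exists_common_adj (hPQ.notMem_of_mem_right hq₀)
      (hPQ.notMem_of_mem_right hq) hP₂
    have hpK : p ∈ K.supp := (K.mem_supp_congr_adj (hH p hp q₀ hq₀ hq₀p.symm)).mpr rfl
    exact (K.mem_supp_congr_adj (hH p hp q hq hqp.symm)).mp hpK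
  refine ⟨K, Set.union_subset (fun p hp => ?_) hQK⟩
  obtain ⟨q, hq, hpq⟩ := hG.exists_adj_of_sub_one_lt (hPQ.notMem_of_mem_left hp) hQ
  exact (K.mem_supp_congr_adj (hH p hp q hq hpq)).mpr (hQK hq)

theorem ncard_add_ncard_lt_half (hG : G.IsDense b) (hb : 1 ≤ b) (hN : 8 * b ≤ Nat.card V)
    (hH : ∀ K : H.ConnectedComponent, (K.supp.ncard : ℝ) < Nat.card V / 2)
    {P Q : Set V} (hPQ : Disjoint P Q) (hcross : ∀ p ∈ P, ∀ q ∈ Q, G.Adj p q → H.Adj p q)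
    (hP : b ≤ P.ncard) (hP' : P.ncard + b ≤ Nat.card V / 2) :
    (P.ncard : ℝ) + Q.ncard < Nat.card V / 2 := by
  by_cases hmerge : b - 1 < Q.ncard ∧ (2 * (b - 1) < P.ncard ∨ 2 * (b - 1) < Q.ncard)
  · obtain ⟨K, hK⟩ := hG.exists_connectedComponent_union_subset hb hPQ hcross (by linarith)
      hmerge.1 hmerge.2
    have hPQK : ((P.ncard + Q.ncard : ℕ) : ℝ) ≤ K.supp.ncard := by
      rw [← Set.ncard_union_eq hPQ]; exact_mod_cast Set.ncard_le_ncard hK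
    push_cast at hPQK
    linarith [hH K]
  · rw [not_and_or, not_lt, not_or, not_lt, not_lt] at hmerge
    rcases hmerge with hQ | ⟨hP₂, hQ⟩ <;> linarith

end IsDense
end SimpleGraph

theorem Set.ncard_inter_add_ncard_compl_inter {α : Type*} [Finite α] (A S : Set α) :
    (A ∩ S).ncard + (Aᶜ ∩ S).ncard = S.ncard := by
  rw [← Set.ncard_inter_add_ncard_sdiff_eq_ncard S A, Set.inter_comm, Set.sdiff_eq,
    Set.inter_comm S Aᶜ]

namespace SimpleGraph

variable {V : Type*} {G H₁ H₂ : SimpleGraph V} {b : ℝ} {A : Set V}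

/-- What a counterexample to the theorem provides: `A` is the vertex set of the largest
component, `H₁` and `H₂` are the other two colour classes, and `b` stands for `N / 8`. -/
structure CutCover (G H₁ H₂ : SimpleGraph V) (b : ℝ) (A : Set V) : Prop where
  isDense : G.IsDense b
  one_le : 1 ≤ b
  eight_mul_le : 8 * b ≤ Nat.card V
  adj_of_crossing : ∀ ⦃u v⦄, G.Adj u v → u ∈ A → v ∉ A → (H₁ ⊔ H₂).Adj u v
  ncard_supp_lt₁ : ∀ K : H₁.ConnectedComponent, (K.supp.ncard : ℝ) < Nat.card V / 2
  ncard_supp_lt₂ : ∀ K : H₂.ConnectedComponent, (K.supp.ncard : ℝ) < Nat.card V / 2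

namespace CutCover

theorem symm (h : CutCover G H₁ H₂ b A) : CutCover G H₂ H₁ b A where
  __ := h
  adj_of_crossing _ _ huv hu hv := sup_comm H₁ H₂ ▸ h.adj_of_crossing huv hu hv
  ncard_supp_lt₁ := h.ncard_supp_lt₂
  ncard_supp_lt₂ := h.ncard_supp_lt₁

theorem compl (h : CutCover G H₁ H₂ b A) : CutCover G H₁ H₂ b Aᶜ where
  __ := h
  adj_of_crossing _ _ huv hu hv :=
    (h.adj_of_crossing huv.symm (Set.notMem_compl_iff.mp hv) hu).symm

theorem adj_of_mem_supp_of_notMem_supp (h : CutCover G H₁ H₂ b A) (M : H₁.ConnectedComponent)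
    {u v : V} (hu : u ∈ A ∩ M.supp) (hv : v ∈ Aᶜ \ M.supp) (huv : G.Adj u v) : H₂.Adj u v :=
  (h.adj_of_crossing huv hu.1 hv.1).resolve_left fun h₁ =>
    hv.2 ((M.mem_supp_congr_adj h₁).mp hu.2)

variable [Finite V]

theorem ncard_inter_supp_lt_or (h : CutCover G H₁ H₂ b A) (M : H₁.ConnectedComponent) :
    ((A ∩ M.supp).ncard : ℝ) < b ∨ ((Aᶜ ∩ M.supp).ncard : ℝ) < b := by
  by_contra! ⟨hA, hAc⟩
  have hM : ((A ∩ M.supp).ncard : ℝ) + (Aᶜ ∩ M.supp).ncard = M.supp.ncard := by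
    exact_mod_cast Set.ncard_inter_add_ncard_compl_inter A M.supp
  have hcard : (A.ncard : ℝ) + Aᶜ.ncard = Nat.card V := by
    exact_mod_cast Set.ncard_add_ncard_compl A
  have hsplit : ((A ∩ M.supp).ncard : ℝ) + (A \ M.supp).ncard = A.ncard := by
    exact_mod_cast Set.ncard_inter_add_ncard_sdiff_eq_ncard A M.supp
  have hsplit' : ((Aᶜ ∩ M.supp).ncard : ℝ) + (Aᶜ \ M.supp).ncard = Aᶜ.ncard := by
    exact_mod_cast Set.ncard_inter_add_ncard_sdiff_eq_ncard Aᶜ M.supp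
  have hlt := h.ncard_supp_lt₁ M
  have h₁ := h.isDense.ncard_add_ncard_lt_half h.one_le h.eight_mul_le h.ncard_supp_lt₂
    (disjoint_compl_right.mono Set.inter_subset_left Set.sdiff_subset)
    (fun _ hp _ hq => h.adj_of_mem_supp_of_notMem_supp M hp hq) hA (by linarith)
  have h₂ := h.isDense.ncard_add_ncard_lt_half h.one_le h.eight_mul_le h.ncard_supp_lt₂
    (disjoint_compl_left.mono Set.inter_subset_left Set.sdiff_subset)
    (fun _ hp _ hq => h.compl.adj_of_mem_supp_of_notMem_supp M hp
      ⟨Set.notMem_compl_iff.mpr hq.1, hq.2⟩) hAc (by linarith)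
  linarith

theorem ncard_inter_supp_le (h : CutCover G H₁ H₂ b A) (hAc : 2 * b ≤ Aᶜ.ncard)
    (M : H₁.ConnectedComponent) (hM : b ≤ (A ∩ M.supp).ncard) :
    ((A ∩ M.supp).ncard : ℝ) ≤ 2 * (b - 1) ∧ (Aᶜ.ncard : ℝ) < 3 * b - 2 := by
  have hMc := (h.ncard_inter_supp_lt_or M).resolve_left hM.not_gt
  have hsplit : ((Aᶜ ∩ M.supp).ncard : ℝ) + (Aᶜ \ M.supp).ncard = Aᶜ.ncard := by
    exact_mod_cast Set.ncard_inter_add_ncard_sdiff_eq_ncard Aᶜ M.supp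
  have hsmall : ¬(2 * (b - 1) < (A ∩ M.supp).ncard ∨ 2 * (b - 1) < (Aᶜ \ M.supp).ncard) := by
    intro hbig
    obtain ⟨W, hW⟩ := h.isDense.exists_connectedComponent_union_subset h.one_le
      (disjoint_compl_right.mono Set.inter_subset_left Set.sdiff_subset)
      (fun _ hp _ hq => h.adj_of_mem_supp_of_notMem_supp M hp hq) (by linarith) (by linarith)
      hbig
    have hAW : (A ∩ M.supp).ncard ≤ (A ∩ W.supp).ncard :=
      Set.ncard_le_ncard fun x hx => ⟨hx.1, hW (.inl hx)⟩
    have hAcW : (Aᶜ \ M.supp).ncard ≤ (Aᶜ ∩ W.supp).ncard :=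
      Set.ncard_le_ncard fun x hx => ⟨hx.1, hW (.inr hx)⟩
    rcases h.symm.ncard_inter_supp_lt_or W with hW' | hW'
    · have : ((A ∩ M.supp).ncard : ℝ) ≤ (A ∩ W.supp).ncard := by exact_mod_cast hAW
      linarith
    · have : ((Aᶜ \ M.supp).ncard : ℝ) ≤ (Aᶜ ∩ W.supp).ncard := by exact_mod_cast hAcW
      linarith
  push Not at hsmall
  constructor <;> linarith

theorem ncard_sub_le_ncard_inter_supp_add (h : CutCover G H₁ H₂ b A) {w : V} (hw : w ∉ A) :
    (A.ncard : ℝ) - (b - 1) ≤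
      (A ∩ (H₁.connectedComponentMk w).supp).ncard +
        (A ∩ (H₂.connectedComponentMk w).supp).ncard := by
  set M₁ := H₁.connectedComponentMk w
  set M₂ := H₂.connectedComponentMk w
  have hsub : A ∩ G.neighborSet w ⊆ (A ∩ M₁.supp) ∪ (A ∩ M₂.supp) := by
    rintro y ⟨hy, hwy⟩
    rcases h.adj_of_crossing (G.adj_symm hwy) hy hw with hyw | hyw
    · exact .inl ⟨hy, ConnectedComponent.connectedComponentMk_eq_of_adj hyw⟩
    · exact .inr ⟨hy, ConnectedComponent.connectedComponentMk_eq_of_adj hyw⟩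
  have hle : ((A ∩ G.neighborSet w).ncard : ℝ) ≤ (A ∩ M₁.supp).ncard + (A ∩ M₂.supp).ncard := by
    exact_mod_cast (Set.ncard_le_ncard hsub).trans (Set.ncard_union_le _ _)
  linarith [h.isDense.ncard_sub_le_ncard_inter_neighborSet hw]

theorem ncard_lt (h : CutCover G H₁ H₂ b A) (hAc : 2 * b ≤ Aᶜ.ncard) :
    (A.ncard : ℝ) < 5 * b - 1 ∧ (3 * b - 2 ≤ Aᶜ.ncard → (A.ncard : ℝ) < 3 * b - 1) := by
  obtain ⟨w, hw⟩ := Set.nonempty_of_ncard_ne_zero (s := Aᶜ) (by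
    intro h0; rw [h0] at hAc; push_cast at hAc; linarith [h.one_le])
  have hpivot := h.ncard_sub_le_ncard_inter_supp_add hw
  have hpart : ∀ x : ℝ, (b ≤ x → x ≤ 2 * (b - 1) ∧ (Aᶜ.ncard : ℝ) < 3 * b - 2) →
      x < 2 * b ∧ (3 * b - 2 ≤ Aᶜ.ncard → x < b) := fun x hx => by
    rcases lt_or_ge x b with hx' | hx'
    · exact ⟨by linarith [h.one_le], fun _ => hx'⟩
    · have := hx hx'
      exact ⟨by linarith, fun _ => by linarith⟩
  have h₁ := hpart _ (h.ncard_inter_supp_le hAc (H₁.connectedComponentMk w))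
  have h₂ := hpart _ (h.symm.ncard_inter_supp_le hAc (H₂.connectedComponentMk w))
  exact ⟨by linarith [h₁.1, h₂.1], fun hAc' => by linarith [h₁.2 hAc', h₂.2 hAc']⟩

theorem false (h : CutCover G H₁ H₂ b A) (hA : 2 * b ≤ A.ncard) (hAc : 2 * b ≤ Aᶜ.ncard) :
    False := by
  have hcard : (A.ncard : ℝ) + Aᶜ.ncard = Nat.card V := by
    exact_mod_cast Set.ncard_add_ncard_compl A
  have hA' := h.ncard_lt hAc
  have hAc' := h.compl.ncard_lt (by rwa [compl_compl])
  have := h.eight_mul_le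
  rcases lt_or_ge (Aᶜ.ncard : ℝ) (3 * b - 2) with hsmall | hbig
  · linarith [hA'.1]
  · linarith [hA'.2 hbig, hAc'.1]

end CutCover
end SimpleGraph

section Colouring

variable {V : Type*} {G : SimpleGraph V} {c : Sym2 V → Fin 3}

variable (G c) in
theorem exists_ncard_neighborSet_le_three_mul_ncard_supp [Finite V] (v : V) :
    ∃ j, (G.neighborSet v).ncard ≤
      3 * ((colourGraph G c j).connectedComponentMk v).supp.ncard := by
  have hsub : G.neighborSet v ⊆ ⋃ j, ((colourGraph G c j).connectedComponentMk v).supp :=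
    fun u hu => Set.mem_iUnion.mpr
      ⟨c s(v, u), (ConnectedComponent.connectedComponentMk_eq_of_adj
        (show (colourGraph G c (c s(v, u))).Adj v u from ⟨hu, rfl⟩)).symm⟩
  have hsum := (Set.ncard_le_ncard hsub).trans (Set.ncard_iUnion_le_of_fintype _)
  obtain ⟨j, -, hj⟩ := Finset.exists_le_of_sum_le (s := Finset.univ)
    (f := fun _ => (G.neighborSet v).ncard)
    (g := fun j => 3 * ((colourGraph G c j).connectedComponentMk v).supp.ncard)
    Finset.univ_nonempty (by simp only [Finset.sum_const, Finset.card_univ, Fintype.card_fin,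
      smul_eq_mul, ← Finset.mul_sum]; omega)
  exact ⟨j, hj⟩

theorem Fin.eq_add_one_or_eq_add_two_of_ne {i j : Fin 3} (h : j ≠ i) :
    j = i + 1 ∨ j = i + 2 := by
  revert i j; decide

theorem colourGraph_sup_adj_of_mem_supp_of_notMem_supp {i : Fin 3}
    {K : (colourGraph G c i).ConnectedComponent} {u v : V} (huv : G.Adj u v) (hu : u ∈ K.supp)
    (hv : v ∉ K.supp) : (colourGraph G c (i + 1) ⊔ colourGraph G c (i + 2)).Adj u v := by
  have hne : c s(u, v) ≠ i := fun hi => hv ((K.mem_supp_congr_adj ⟨huv, hi⟩).mp hu)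
  exact (Fin.eq_add_one_or_eq_add_two_of_ne hne).imp (fun h => ⟨huv, h⟩) (fun h => ⟨huv, h⟩)

end Colouring

/-- Let G be a graph on N vertices with minimum degree at least N − N/8, 3-edge-coloured.
If the largest monochromatic component K₁ of G has fewer than 3N/4 vertices, then there
exists a monochromatic component of a different colour with at least N/2 vertices. -/
theorem stmt14 (N : ℕ) (G : SimpleGraph (Fin N))
    (hdeg : ∀ v, (N : ℝ) - (N : ℝ) / 8 ≤ (G.neighborSet v).ncard)
    (c : Sym2 (Fin N) → Fin 3)
    (i₁ : Fin 3) (K₁ : (colourGraph G c i₁).ConnectedComponent)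
    (hmax : ∀ (j : Fin 3) (K : (colourGraph G c j).ConnectedComponent),
      K.supp.ncard ≤ K₁.supp.ncard)
    (hsmall : (K₁.supp.ncard : ℝ) < 3 * (N : ℝ) / 4) :
    ∃ (j : Fin 3) (K : (colourGraph G c j).ConnectedComponent),
      j ≠ i₁ ∧ (N : ℝ) / 2 ≤ K.supp.ncard := by
  by_contra! hcon
  obtain ⟨v₀, hv₀⟩ := K₁.nonempty_supp
  have hG : G.IsDense (N / 8) := by simpa only [IsDense, Nat.card_fin] using hdeg
  have hcover : G.CutCover (colourGraph G c (i₁ + 1)) (colourGraph G c (i₁ + 2)) (N / 8)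
      K₁.supp :=
    { isDense := hG
      one_le := haveI : Nonempty (Fin N) := ⟨v₀⟩; hG.one_le
      eight_mul_le := by rw [Nat.card_fin]; linarith
      adj_of_crossing := fun _ _ => colourGraph_sup_adj_of_mem_supp_of_notMem_supp
      ncard_supp_lt₁ := fun K => by
        simpa using hcon _ K ((by decide : ∀ i : Fin 3, i + 1 ≠ i) i₁)
      ncard_supp_lt₂ := fun K => by
        simpa using hcon _ K ((by decide : ∀ i : Fin 3, i + 2 ≠ i) i₁) }
  obtain ⟨j, hj⟩ := exists_ncard_neighborSet_le_three_mul_ncard_supp G c v₀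
  have hA : 2 * ((N : ℝ) / 8) ≤ K₁.supp.ncard := by
    have : ((G.neighborSet v₀).ncard : ℝ) ≤ 3 * K₁.supp.ncard := by
      exact_mod_cast hj.trans (Nat.mul_le_mul_left 3 (hmax j _))
    linarith [hdeg v₀]
  have hAc : 2 * ((N : ℝ) / 8) ≤ K₁.suppᶜ.ncard := by
    have : (K₁.supp.ncard : ℝ) + K₁.suppᶜ.ncard = N := by
      exact_mod_cast (Set.ncard_add_ncard_compl K₁.supp).trans (Nat.card_fin N)
    linarith
  exact hcover.false hA hAc
end

section
/- For all sufficiently large N the following holds. Let Ĥ = Ĥ(m₀; m₁, m₂, 0) be the graph on vertex set W partitioned into disjoint sets Z₀, Z₁, Z₂ of sizes m₀, m₁, m₂, whose edges are all pairs of vertices in two different parts together with all pairs inside Z₀. Let J be a b'-dense subgraph of Ĥ where b' ≤ N/8 − 6√N, and suppose (i) m₀ + m₁ + m₂ ≤ N, (ii) m₀ + m₁/2 + m₂ ≥ 3N/4, (iii) m₂ ≤ N/4, and (iv) m₀ > N/2 − m₂ ≥ N/4. Suppose the edges of J are coloured with two colours and that no monochromatic component of J contains a matching saturating at least N/2 vertices.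 Then the vertex set W can be covered by two monochromatic components of different colours; furthermore, either Z₀ is entirely contained in one of them, or each of the two components covers all but at most b' vertices of W. -/
open SimpleGraph

/-- The graph Ĥ(m₀; m₁, m₂, 0) on a vertex set partitioned into parts `Z 0, Z 1, Z 2`:
its edges are all pairs of vertices lying in two different parts together with all pairs
inside `Z 0`. -/
def hatH3 {V : Type*} (Z : Fin 3 → Set V) : SimpleGraph V where
  Adj u v := u ≠ v ∧ ((u ∈ Z 0 ∧ v ∈ Z 0) ∨ ∃ i j : Fin 3, i ≠ j ∧ u ∈ Z i ∧ v ∈ Z j)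
  symm := by
    constructor
    rintro u v ⟨hne, h⟩
    refine ⟨hne.symm, ?_⟩
    rcases h with ⟨h1, h2⟩ | ⟨i, j, hij, hi, hj⟩
    · exact Or.inl ⟨h2, h1⟩
    · exact Or.inr ⟨j, i, hij.symm, hj, hi⟩
  loopless := ⟨fun v h => h.1 rfl⟩

/-- The subgraph of `J` spanned by the edges of colour `i` under the 2-edge-colouring `c`. -/
def colourGraph2 {V : Type*} (J : SimpleGraph V) (c : Sym2 V → Fin 2) (i : Fin 2) :
    SimpleGraph V where
  Adj u v := J.Adj u v ∧ c s(u, v) = i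
  symm := ⟨fun u v h => ⟨h.1.symm, by rw [Sym2.eq_swap]; exact h.2⟩⟩
  loopless := ⟨fun v h => J.irrefl h.1⟩

/-!
Every vertex of `J` misses fewer than `b` of its `Ĥ`-neighbours, and the vertices of `Z₀` are
adjacent in `Ĥ` to all other vertices. Write `R(x)`, `B(x)` for the red and blue components of `x`.

If two vertices `u, v ∈ Z₀` have `R(u) ≠ R(v)` and `B(u) ≠ B(v)`, then every common `J`-neighbour of
`u` and `v` lies in `P = R(u) ∩ B(v)` or in `Q = R(v) ∩ B(u)`, so `P ∪ Q` misses fewer than `2b + 2`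
vertices. As `Z₀` is larger than that, it meets `P` (say); that vertex of `Z₀` has no `J`-neighbour
in `Q`, so `Q` is small and `P` misses fewer than `3b + 2` vertices. A vertex outside `R(u) ∪ B(v)`
has no `J`-neighbour in `P`, which the sizes of the parts rule out; hence `R(u) ∪ B(v)` is
everything, and then `u` (resp. `v`) has no `J`-neighbour outside `R(u)` (resp. `B(v)`).

Otherwise any two vertices of `Z₀` share a component of some colour, so all of `Z₀` lies in one
monochromatic component `K`. All `J`-edges from a vertex outside `K` to `Z₀` have the other colour;
as `Z₀` has at least `2b` vertices, all vertices outside `K` lie in one component of that colour.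
-/

def IsDenseSubgraph {V : Type*} (J H : SimpleGraph V) (b : ℝ) : Prop :=
  J ≤ H ∧ ∀ v, ((H.neighborSet v).ncard : ℝ) < (J.neighborSet v).ncard + b

theorem forall_apply_eq_or_forall_apply_eq {α β γ : Type*} {s : Set α} {a : α}
    (f : α → β) (g : α → γ) (h : ∀ x ∈ s, ∀ y ∈ s, f x = f y ∨ g x = g y) (ha : a ∈ s) :
    (∀ x ∈ s, f x = f a) ∨ (∀ x ∈ s, g x = g a) := by
  by_contra! ⟨⟨x, hx, hfx⟩, ⟨y, hy, hgy⟩⟩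
  have hgx : g x = g a := (h x hx a ha).resolve_left hfx
  have hfy : f y = f a := (h y hy a ha).resolve_right hgy
  rcases h x hx y hy with hxy | hxy
  · exact hfx (hxy.trans hfy)
  · exact hgy (hxy.symm.trans hgx)

section TwoColours

variable {V : Type*} {J R B : SimpleGraph V} {K₁ K₂ : R.ConnectedComponent}
  {L₁ L₂ : B.ConnectedComponent}

theorem mem_supp_or_mem_supp_of_adj (hRB : J ≤ R ⊔ B) {K : R.ConnectedComponent}
    {L : B.ConnectedComponent} {x y : V} (hx : x ∈ K.supp ∩ L.supp) (hxy : J.Adj x y) :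
    y ∈ K.supp ∨ y ∈ L.supp :=
  (hRB hxy).imp (fun h => (K.mem_supp_congr_adj h).1 hx.1)
    (fun h => (L.mem_supp_congr_adj h).1 hx.2)

theorem mem_union_of_adj_of_adj (hRB : J ≤ R ⊔ B) (hK : K₁ ≠ K₂) (hL : L₁ ≠ L₂) {u v w : V}
    (hu : u ∈ K₁.supp ∩ L₁.supp) (hv : v ∈ K₂.supp ∩ L₂.supp) (huw : J.Adj u w)
    (hvw : J.Adj v w) : w ∈ K₁.supp ∩ L₂.supp ∪ K₂.supp ∩ L₁.supp := by
  rcases mem_supp_or_mem_supp_of_adj hRB hu huw with h₁ | h₁ <;>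
    rcases mem_supp_or_mem_supp_of_adj hRB hv hvw with h₂ | h₂
  · exact absurd (h₁.symm.trans h₂) hK
  · exact Or.inl ⟨h₁, h₂⟩
  · exact Or.inr ⟨h₂, h₁⟩
  · exact absurd (h₁.symm.trans h₂) hL

theorem not_adj_of_mem_inter (hRB : J ≤ R ⊔ B) (hK : K₁ ≠ K₂) (hL : L₁ ≠ L₂) {x y : V}
    (hx : x ∈ K₁.supp ∩ L₂.supp) (hy : y ∈ K₂.supp ∩ L₁.supp) : ¬J.Adj x y := fun hxy =>
  (mem_supp_or_mem_supp_of_adj hRB hx hxy).elim (fun h => hK (h.symm.trans hy.1))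
    (fun h => hL (hy.2.symm.trans h))

variable [Finite V] {H : SimpleGraph V} {b : ℝ}

theorem IsDenseSubgraph.ncard_lt (hJ : IsDenseSubgraph J H b) {u : V} {S : Set V}
    (hH : ∀ y ∈ S, H.Adj u y) (hJS : ∀ y ∈ S, ¬J.Adj u y) : (S.ncard : ℝ) < b := by
  have hS : S.ncard + (J.neighborSet u).ncard ≤ (H.neighborSet u).ncard := by
    rw [← Set.ncard_sdiff_add_ncard_of_subset (s := J.neighborSet u) (t := H.neighborSet u)
      (fun y hy => hJ.1 hy)]
    gcongr
    · exact Set.toFinite _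
    · exact fun y hy => ⟨hH y hy, hJS y hy⟩
  have hS' : (S.ncard : ℝ) + (J.neighborSet u).ncard ≤ (H.neighborSet u).ncard := by
    exact_mod_cast hS
  linarith [hJ.2 u]

theorem IsDenseSubgraph.ncard_lt_of_forall_ne_adj (hJ : IsDenseSubgraph J H b) {u : V}
    {S : Set V} (hu : ∀ y, y ≠ u → H.Adj u y) (huS : u ∉ S) (hJS : ∀ y ∈ S, ¬J.Adj u y) :
    (S.ncard : ℝ) < b :=
  hJ.ncard_lt (fun y hy => hu y (ne_of_mem_of_not_mem hy huS)) hJS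

theorem ncard_compl_union_inter_lt (hJ : IsDenseSubgraph J H b) (hRB : J ≤ R ⊔ B)
    (hK : K₁ ≠ K₂) (hL : L₁ ≠ L₂) {u v : V} (hu : u ∈ K₁.supp ∩ L₁.supp)
    (hv : v ∈ K₂.supp ∩ L₂.supp) (huH : ∀ y, y ≠ u → H.Adj u y)
    (hvH : ∀ y, y ≠ v → H.Adj v y) :
    (((K₁.supp ∩ L₂.supp ∪ K₂.supp ∩ L₁.supp)ᶜ).ncard : ℝ) < 2 * b + 2 := by
  set Mu := {y | y ≠ u ∧ ¬J.Adj u y}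
  set Mv := {y | y ≠ v ∧ ¬J.Adj v y}
  have hMu : (Mu.ncard : ℝ) < b :=
    hJ.ncard_lt_of_forall_ne_adj huH (fun h => h.1 rfl) fun _ h => h.2
  have hMv : (Mv.ncard : ℝ) < b :=
    hJ.ncard_lt_of_forall_ne_adj hvH (fun h => h.1 rfl) fun _ h => h.2
  have hsub : (K₁.supp ∩ L₂.supp ∪ K₂.supp ∩ L₁.supp)ᶜ ⊆ insert u (insert v (Mu ∪ Mv)) := by
    intro w hw
    by_contra! h
    simp only [Set.mem_insert_iff, Set.mem_union, Set.mem_ofPred_eq, not_or, not_and,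
      not_not, Mu, Mv] at h
    obtain ⟨hwu, hwv, hux, hvx⟩ := h
    exact hw (mem_union_of_adj_of_adj hRB hK hL hu hv (hux hwu) (hvx hwv))
  have hcard : ((K₁.supp ∩ L₂.supp ∪ K₂.supp ∩ L₁.supp)ᶜ).ncard ≤ Mu.ncard + Mv.ncard + 2 :=
    calc _ ≤ (insert u (insert v (Mu ∪ Mv))).ncard := Set.ncard_le_ncard hsub
      _ ≤ (Mu ∪ Mv).ncard + 1 + 1 := by
        grw [Set.ncard_insert_le, Set.ncard_insert_le]
      _ ≤ Mu.ncard + Mv.ncard + 2 := by grw [Set.ncard_union_le]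
  have := (Nat.cast_le (α := ℝ)).2 hcard
  push_cast at this
  linarith

theorem ncard_compl_inter_lt (hJ : IsDenseSubgraph J H b) (hRB : J ≤ R ⊔ B) (hK : K₁ ≠ K₂)
    (hL : L₁ ≠ L₂) {z : V} (hz : z ∈ K₁.supp ∩ L₂.supp) (hzH : ∀ y, y ≠ z → H.Adj z y)
    (hPQ : (((K₁.supp ∩ L₂.supp ∪ K₂.supp ∩ L₁.supp)ᶜ).ncard : ℝ) < 2 * b + 2) :
    (((K₁.supp ∩ L₂.supp)ᶜ).ncard : ℝ) < 3 * b + 2 := by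
  have hQ : ((K₂.supp ∩ L₁.supp).ncard : ℝ) < b :=
    hJ.ncard_lt_of_forall_ne_adj hzH (fun h => hK (hz.1.symm.trans h.1))
      fun _ hy => not_adj_of_mem_inter hRB hK hL hz hy
  have hsub : (K₁.supp ∩ L₂.supp)ᶜ ⊆
      K₂.supp ∩ L₁.supp ∪ (K₁.supp ∩ L₂.supp ∪ K₂.supp ∩ L₁.supp)ᶜ := fun w hw => by
    by_cases h : w ∈ K₂.supp ∩ L₁.supp
    exacts [Or.inl h, Or.inr fun h' => h'.elim hw h]
  have := (Nat.cast_le (α := ℝ)).2 ((Set.ncard_le_ncard hsub).trans (Set.ncard_union_le _ _))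
  push_cast at this
  linarith

theorem supp_union_supp_eq_univ (hJ : IsDenseSubgraph J H b) (hRB : J ≤ R ⊔ B)
    {K : R.ConnectedComponent} {L : B.ConnectedComponent}
    (hT : ∀ w, ∃ T : Set V, 4 * b + 2 ≤ (Tᶜ.ncard : ℝ) ∧ ∀ y ∉ T, y ≠ w → H.Adj w y)
    (hKL : (((K.supp ∩ L.supp)ᶜ).ncard : ℝ) < 3 * b + 2) : K.supp ∪ L.supp = Set.univ := by
  refine Set.eq_univ_of_forall fun w => by_contra fun hw => ?_
  obtain ⟨T, hTcard, hTH⟩ := hT w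
  have hP : (((K.supp ∩ L.supp) \ T).ncard : ℝ) < b :=
    hJ.ncard_lt (fun y hy => hTH y hy.2 fun h => hw (Or.inl (h ▸ hy.1.1)))
      fun y hy hwy => hw (mem_supp_or_mem_supp_of_adj hRB hy.1 hwy.symm)
  have hsub : Tᶜ ⊆ (K.supp ∩ L.supp) \ T ∪ (K.supp ∩ L.supp)ᶜ := fun y hy => by
    by_cases h : y ∈ K.supp ∩ L.supp
    exacts [Or.inl ⟨h, hy⟩, Or.inr h]
  have := (Nat.cast_le (α := ℝ)).2 ((Set.ncard_le_ncard hsub).trans (Set.ncard_union_le _ _))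
  push_cast at this
  linarith

theorem ncard_compl_supp_lt (hJ : IsDenseSubgraph J H b) (hRB : J ≤ R ⊔ B)
    {K : R.ConnectedComponent} (hL : L₁ ≠ L₂) {u : V} (hu : u ∈ K.supp ∩ L₁.supp)
    (huH : ∀ y, y ≠ u → H.Adj u y) (hKL : K.supp ∪ L₂.supp = Set.univ) :
    ((K.suppᶜ).ncard : ℝ) < b :=
  hJ.ncard_lt_of_forall_ne_adj huH (fun h => h hu.1) fun y hy huy =>
    have hy₂ : y ∈ L₂.supp := (hKL.symm ▸ Set.mem_univ y : y ∈ K.supp ∪ L₂.supp).resolve_left hy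
    (mem_supp_or_mem_supp_of_adj hRB hu huy).elim hy fun h => hL (h.symm.trans hy₂)

theorem supp_union_eq_univ_and_ncard_compl_lt (hJ : IsDenseSubgraph J H b)
    (hRB : J ≤ R ⊔ B) (hK : K₁ ≠ K₂) (hL : L₁ ≠ L₂)
    (hT : ∀ w, ∃ T : Set V, 4 * b + 2 ≤ (Tᶜ.ncard : ℝ) ∧ ∀ y ∉ T, y ≠ w → H.Adj w y)
    {u v z : V} (hu : u ∈ K₁.supp ∩ L₁.supp) (hv : v ∈ K₂.supp ∩ L₂.supp)
    (hz : z ∈ K₁.supp ∩ L₂.supp) (huH : ∀ y, y ≠ u → H.Adj u y)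
    (hvH : ∀ y, y ≠ v → H.Adj v y) (hzH : ∀ y, y ≠ z → H.Adj z y) :
    K₁.supp ∪ L₂.supp = Set.univ ∧ ((K₁.suppᶜ).ncard : ℝ) < b ∧ ((L₂.suppᶜ).ncard : ℝ) < b := by
  have hPQ := ncard_compl_union_inter_lt hJ hRB hK hL hu hv huH hvH
  have hcover := supp_union_supp_eq_univ hJ hRB hT (ncard_compl_inter_lt hJ hRB hK hL hz hzH hPQ)
  exact ⟨hcover, ncard_compl_supp_lt hJ hRB hL hu huH hcover,
    ncard_compl_supp_lt hJ (hRB.trans (sup_comm R B).le) hK.symm ⟨hv.2, hv.1⟩ hvH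
      ((Set.union_comm _ _).trans hcover)⟩

theorem exists_supp_union_eq_univ_of_ne_of_ne (hJ : IsDenseSubgraph J H b) (hRB : J ≤ R ⊔ B)
    {A : Set V} (hAH : ∀ a ∈ A, ∀ y, y ≠ a → H.Adj a y) (hA : 2 * b + 2 ≤ A.ncard)
    (hT : ∀ w, ∃ T : Set V, 4 * b + 2 ≤ (Tᶜ.ncard : ℝ) ∧ ∀ y ∉ T, y ≠ w → H.Adj w y)
    {u v : V} (hu : u ∈ A) (hv : v ∈ A) (hR : R.connectedComponentMk u ≠ R.connectedComponentMk v)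
    (hB : B.connectedComponentMk u ≠ B.connectedComponentMk v) :
    ∃ (K : R.ConnectedComponent) (L : B.ConnectedComponent), K.supp ∪ L.supp = Set.univ ∧
      ((K.suppᶜ).ncard : ℝ) < b ∧ ((L.suppᶜ).ncard : ℝ) < b := by
  have hu' : u ∈ (R.connectedComponentMk u).supp ∩ (B.connectedComponentMk u).supp := ⟨rfl, rfl⟩
  have hv' : v ∈ (R.connectedComponentMk v).supp ∩ (B.connectedComponentMk v).supp := ⟨rfl, rfl⟩
  have hPQ := ncard_compl_union_inter_lt hJ hRB hR hB hu' hv' (hAH u hu) (hAH v hv)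
  obtain ⟨z, hzA, hz⟩ := Set.not_subset.1 fun h : A ⊆ ((R.connectedComponentMk u).supp ∩
      (B.connectedComponentMk v).supp ∪ (R.connectedComponentMk v).supp ∩
      (B.connectedComponentMk u).supp)ᶜ => by
    have := (Nat.cast_le (α := ℝ)).2 (Set.ncard_le_ncard h)
    linarith
  rcases not_not.1 hz with hz | hz
  · exact ⟨_, _, supp_union_eq_univ_and_ncard_compl_lt hJ hRB hR hB hT hu' hv' hz
      (hAH u hu) (hAH v hv) (hAH z hzA)⟩
  · exact ⟨_, _, supp_union_eq_univ_and_ncard_compl_lt hJ hRB hR.symm hB.symm hT hv' hu' hz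
      (hAH v hv) (hAH u hu) (hAH z hzA)⟩

theorem ncard_diff_supp_lt (hJ : IsDenseSubgraph J H b) (hRB : J ≤ R ⊔ B) {A : Set V}
    (hAH : ∀ a ∈ A, ∀ y, y ≠ a → H.Adj a y) {K : R.ConnectedComponent} (hAK : A ⊆ K.supp)
    {w : V} (hw : w ∉ K.supp) : ((A \ (B.connectedComponentMk w).supp).ncard : ℝ) < b := by
  refine hJ.ncard_lt (fun y hy => (hAH y hy.1 w ?_).symm) fun y hy hwy => ?_
  · rintro rfl
    exact hw (hAK hy.1)
  · have hw' : w ∈ (R.connectedComponentMk w).supp ∩ (B.connectedComponentMk w).supp := ⟨rfl, rfl⟩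
    exact (mem_supp_or_mem_supp_of_adj hRB hw' hwy).elim
      (fun h => hw (h.symm.trans (hAK hy.1))) hy.2

theorem exists_supp_union_eq_univ_of_subset (hJ : IsDenseSubgraph J H b) (hRB : J ≤ R ⊔ B)
    {A : Set V} (hAH : ∀ a ∈ A, ∀ y, y ≠ a → H.Adj a y) (hA : 2 * b ≤ A.ncard)
    {K : R.ConnectedComponent} (hAK : A ⊆ K.supp) :
    ∃ L : B.ConnectedComponent, K.supp ∪ L.supp = Set.univ := by
  by_cases hK : K.supp = Set.univ
  · obtain ⟨x, -⟩ := K.nonempty_supp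
    exact ⟨B.connectedComponentMk x, by rw [hK, Set.univ_union]⟩
  obtain ⟨w₁, hw₁⟩ := (Set.ne_univ_iff_exists_notMem _).1 hK
  refine ⟨B.connectedComponentMk w₁, Set.eq_univ_of_forall fun w =>
    or_iff_not_imp_left.2 fun hw => by_contra fun hne => ?_⟩
  have hsub : A ⊆ A \ (B.connectedComponentMk w).supp ∪ A \ (B.connectedComponentMk w₁).supp :=
    fun a ha => by
      by_cases h : a ∈ (B.connectedComponentMk w).supp
      exacts [Or.inr ⟨ha, fun h' => hne (h.symm.trans h')⟩, Or.inl ⟨ha, h⟩]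
  have := (Nat.cast_le (α := ℝ)).2 ((Set.ncard_le_ncard hsub).trans (Set.ncard_union_le _ _))
  push_cast at this
  linarith [ncard_diff_supp_lt hJ hRB hAH hAK hw, ncard_diff_supp_lt hJ hRB hAH hAK hw₁]

theorem exists_supp_union_eq_univ (hJ : IsDenseSubgraph J H b) (hRB : J ≤ R ⊔ B)
    {A : Set V} (hAH : ∀ a ∈ A, ∀ y, y ≠ a → H.Adj a y) {a : V} (ha : a ∈ A)
    (hA : 2 * b + 2 ≤ A.ncard)
    (hT : ∀ w, ∃ T : Set V, 4 * b + 2 ≤ (Tᶜ.ncard : ℝ) ∧ ∀ y ∉ T, y ≠ w → H.Adj w y) :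
    ∃ (K : R.ConnectedComponent) (L : B.ConnectedComponent), K.supp ∪ L.supp = Set.univ ∧
      ((A ⊆ K.supp ∨ A ⊆ L.supp) ∨ (((K.suppᶜ).ncard : ℝ) ≤ b ∧ ((L.suppᶜ).ncard : ℝ) ≤ b)) := by
  by_cases hsplit : ∃ u ∈ A, ∃ v ∈ A, R.connectedComponentMk u ≠ R.connectedComponentMk v ∧
      B.connectedComponentMk u ≠ B.connectedComponentMk v
  · obtain ⟨u, hu, v, hv, hR, hB⟩ := hsplit
    obtain ⟨K, L, hKL, hK, hL⟩ :=
      exists_supp_union_eq_univ_of_ne_of_ne hJ hRB hAH hA hT hu hv hR hB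
    exact ⟨K, L, hKL, Or.inr ⟨hK.le, hL.le⟩⟩
  push Not at hsplit
  have hA' : 2 * b ≤ A.ncard := by linarith
  rcases forall_apply_eq_or_forall_apply_eq R.connectedComponentMk B.connectedComponentMk
    (fun x hx y hy => or_iff_not_imp_left.2 (hsplit x hx y hy)) ha with hR | hB
  · obtain ⟨L, hL⟩ := exists_supp_union_eq_univ_of_subset hJ hRB hAH hA' hR
    exact ⟨_, L, hL, Or.inl (Or.inl hR)⟩
  · obtain ⟨K, hK⟩ :=
      exists_supp_union_eq_univ_of_subset hJ (hRB.trans (sup_comm R B).le) hAH hA' hB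
    exact ⟨K, _, (Set.union_comm _ _).trans hK, Or.inl (Or.inr hB)⟩

end TwoColours

section Partition

variable {V : Type*} {Z : Fin 3 → Set V}

theorem hatH3_adj_of_mem_zero (hZ : ⋃ i, Z i = Set.univ) {u y : V} (hu : u ∈ Z 0)
    (hy : y ≠ u) : (hatH3 Z).Adj u y := by
  obtain ⟨k, hk⟩ := Set.iUnion_eq_univ_iff.1 hZ y
  refine ⟨hy.symm, ?_⟩
  rcases eq_or_ne k 0 with rfl | hk0
  exacts [Or.inl ⟨hu, hk⟩, Or.inr ⟨0, k, hk0.symm, hu, hk⟩]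

theorem hatH3_adj_of_notMem (hZ : ⋃ i, Z i = Set.univ) {k : Fin 3} {w y : V} (hw : w ∈ Z k)
    (hy : y ∉ Z k) : (hatH3 Z).Adj w y := by
  obtain ⟨k', hk'⟩ := Set.iUnion_eq_univ_iff.1 hZ y
  exact ⟨fun h => hy (h ▸ hw), Or.inr ⟨k, k', fun h => hy (h ▸ hk'), hw, hk'⟩⟩

theorem hatH3_exists_supp_union_eq_univ [Finite V] {J R B : SimpleGraph V} {b : ℝ}
    (hZ : ⋃ i, Z i = Set.univ) (hJ : IsDenseSubgraph J (hatH3 Z) b) (hRB : J ≤ R ⊔ B)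
    (hZne : (Z 0).Nonempty) (hZ0 : 2 * b + 2 ≤ (Z 0).ncard) (hV : 4 * b + 3 ≤ Nat.card V)
    (hZc : ∀ k, k ≠ 0 → 4 * b + 2 ≤ (((Z k)ᶜ).ncard : ℝ)) :
    ∃ (K : R.ConnectedComponent) (L : B.ConnectedComponent), K.supp ∪ L.supp = Set.univ ∧
      ((Z 0 ⊆ K.supp ∨ Z 0 ⊆ L.supp) ∨
        (((K.suppᶜ).ncard : ℝ) ≤ b ∧ ((L.suppᶜ).ncard : ℝ) ≤ b)) := by
  obtain ⟨a, ha⟩ := hZne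
  refine exists_supp_union_eq_univ hJ hRB (fun u hu y hy => hatH3_adj_of_mem_zero hZ hu hy) ha
    hZ0 fun w => ?_
  obtain ⟨k, hk⟩ := Set.iUnion_eq_univ_iff.1 hZ w
  rcases eq_or_ne k 0 with rfl | hk0
  · refine ⟨{w}, ?_, fun y _ hy => hatH3_adj_of_mem_zero hZ hk hy⟩
    have := Set.ncard_add_ncard_compl {w}
    rw [Set.ncard_singleton] at this
    have := (Nat.cast_inj (R := ℝ)).2 this
    push_cast at this
    linarith
  · exact ⟨Z k, hZc k hk0, fun y hy _ => hatH3_adj_of_notMem hZ hk hy⟩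

end Partition

theorem le_colourGraph2_sup {V : Type*} (J : SimpleGraph V) (c : Sym2 V → Fin 2) :
    J ≤ colourGraph2 J c 0 ⊔ colourGraph2 J c 1 := fun x y h => by
  have : c s(x, y) = 0 ∨ c s(x, y) = 1 := by omega
  exact this.imp (fun hc => ⟨h, hc⟩) (fun hc => ⟨h, hc⟩)

/-- Claim 10 of the paper: with the setup of Lemma 8 (m₃ = 0), if no monochromatic
component of the 2-coloured J contains a matching saturating at least N/2 vertices, then
the vertex set W can be covered by two monochromatic components of different colours;
moreover either Z₀ is contained in one of them, or each of the two components covers all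
but at most b' vertices of W. -/
theorem stmt19 :
    ∃ N₀ : ℕ, ∀ N : ℕ, N₀ ≤ N →
      ∀ (V : Type) [Fintype V], ∀ (Z : Fin 3 → Set V) (m : Fin 3 → ℕ) (b' : ℝ),
        (⋃ i, Z i) = Set.univ →
        (∀ i j : Fin 3, i ≠ j → Disjoint (Z i) (Z j)) →
        (∀ i, (Z i).ncard = m i) →
        b' ≤ (N : ℝ) / 8 - 6 * Real.sqrt N →
        ∀ J : SimpleGraph V, J ≤ hatH3 Z →
          (∀ v : V, (((hatH3 Z).neighborSet v).ncard : ℝ) < (J.neighborSet v).ncard + b') →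
          m 0 + m 1 + m 2 ≤ N →
          3 * (N : ℝ) / 4 ≤ (m 0 : ℝ) + (m 1 : ℝ) / 2 + m 2 →
          (m 2 : ℝ) ≤ (N : ℝ) / 4 →
          ((N : ℝ) / 2 - m 2 < m 0 ∧ (N : ℝ) / 4 ≤ (N : ℝ) / 2 - m 2) →
          ∀ c : Sym2 V → Fin 2,
            (¬ ∃ (i : Fin 2) (M : (colourGraph2 J c i).Subgraph)
                (K : (colourGraph2 J c i).ConnectedComponent),
                M.IsMatching ∧ M.verts ⊆ K.supp ∧ (N : ℝ) / 2 ≤ M.verts.ncard) →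
            ∃ (i j : Fin 2), i ≠ j ∧
              ∃ (K₂ : (colourGraph2 J c i).ConnectedComponent)
                (K₃ : (colourGraph2 J c j).ConnectedComponent),
                K₂.supp ∪ K₃.supp = Set.univ ∧
                ((Z 0 ⊆ K₂.supp ∨ Z 0 ⊆ K₃.supp) ∨
                  (((K₂.suppᶜ).ncard : ℝ) ≤ b' ∧ ((K₃.suppᶜ).ncard : ℝ) ≤ b')) := by
  refine ⟨1, fun N hN V _ Z m b' hZ hdisj hcard hb' J hJH hdens _ hii hm2 ⟨hm0, hm2'⟩ c _ => ?_⟩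
  have hsqrt : 1 ≤ Real.sqrt N := Real.one_le_sqrt.2 (by exact_mod_cast hN)
  have hV : (Nat.card V : ℝ) = m 0 + m 1 + m 2 := by
    rw [← Set.ncard_univ, ← hZ, Set.ncard_iUnion_of_finite (fun _ => Set.toFinite _) hdisj,
      finsum_eq_sum_of_fintype, Fin.sum_univ_three, hcard, hcard, hcard]
    push_cast
    ring
  have hcompl (k : Fin 3) : (((Z k)ᶜ.ncard : ℕ) : ℝ) = Nat.card V - m k := by
    rw [← hcard k, ← Set.ncard_add_ncard_compl (Z k)]
    push_cast
    ring
  have hm1 : (0 : ℝ) ≤ m 1 := Nat.cast_nonneg _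
  obtain ⟨K, L, hKL, hcover⟩ := hatH3_exists_supp_union_eq_univ hZ ⟨hJH, hdens⟩
    (le_colourGraph2_sup J c)
    (Set.nonempty_of_ncard_ne_zero (by rw [hcard 0]; intro h; simp [h] at hm0; linarith))
    (by rw [hcard 0]; linarith) (by rw [hV]; linarith)
    fun k hk => by
      rw [hcompl, hV]
      obtain rfl | rfl : k = 1 ∨ k = 2 := by omega
      all_goals linarith
  exact ⟨0, 1, by decide, K, L, hKL, hcover⟩
end
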